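/- Let n be a natural number, α > 0 a real number, and v ∈ ℝ^n. Then the supremum over λ in the nonnegative orthant of ⟨λ, v⟩ − ‖λ‖²/(2α) equals (α/2)‖v₊‖², and this supremum is attained at λ = α·v₊, which lies in the nonnegative orthant. (Closed form of the regularized dual function appearing in Propositions 1 and 2.) -/

import Mathlib

open scoped RealInnerProductSpace

/-- The positive part of a vector, taken componentwise. -/
noncomputable def posPart {n : ℕ} (v : EuclideanSpace ℝ (Fin n)) : EuclideanSpace ℝ (Fin n) :=
  WithLp.toLp 2 (fun i => max (v i) 0)

/-! Completing the square, `⟪l, w⟫ - ‖l‖²/(2α) = (α/2)‖w‖² - ‖l - α w‖²/(2α)`, shows that the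
unconstrained maximiser is `α w`. On the nonnegative orthant, `⟪l, v⟫ ≤ ⟪l, v₊⟫`, so the objective
is dominated by the unconstrained one for `w = v₊`, whose maximiser `α v₊` is feasible and has
`⟪α v₊, v⟫ = ⟪α v₊, v₊⟫`. -/

section CompletingTheSquare

variable {E : Type*} [NormedAddCommGroup E] [InnerProductSpace ℝ E]

theorem inner_sub_norm_sq_div_eq {α : ℝ} (hα : α ≠ 0) (l w : E) :
    ⟪l, w⟫ - ‖l‖ ^ 2 / (2 * α) = α / 2 * ‖w‖ ^ 2 - ‖l - α • w‖ ^ 2 / (2 * α) := by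
  rw [norm_sub_sq_real, real_inner_smul_right, norm_smul, Real.norm_eq_abs, mul_pow, sq_abs]
  field_simp
  ring

theorem inner_sub_norm_sq_div_le {α : ℝ} (hα : 0 < α) (l w : E) :
    ⟪l, w⟫ - ‖l‖ ^ 2 / (2 * α) ≤ α / 2 * ‖w‖ ^ 2 := by
  rw [inner_sub_norm_sq_div_eq hα.ne']
  have : 0 ≤ ‖l - α • w‖ ^ 2 / (2 * α) := by positivity
  linarith

theorem inner_smul_self_sub_norm_sq_div {α : ℝ} (hα : α ≠ 0) (w : E) :
    ⟪α • w, w⟫ - ‖α • w‖ ^ 2 / (2 * α) = α / 2 * ‖w‖ ^ 2 := by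
  simp [inner_sub_norm_sq_div_eq hα]

end CompletingTheSquare

section PosPart

variable {n : ℕ}

theorem posPart_apply (v : EuclideanSpace ℝ (Fin n)) (i : Fin n) :
    posPart v i = max (v i) 0 := rfl

theorem posPart_apply_nonneg (v : EuclideanSpace ℝ (Fin n)) (i : Fin n) : 0 ≤ posPart v i :=
  le_max_right _ _

theorem inner_posPart_left (v : EuclideanSpace ℝ (Fin n)) :
    ⟪posPart v, v⟫ = ⟪posPart v, posPart v⟫ := by
  simp only [PiLp.inner_apply, RCLike.inner_apply, conj_trivial, posPart_apply]
  refine Finset.sum_congr rfl fun i _ => ?_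
  rcases le_total (v i) 0 with h | h
  · simp [max_eq_right h]
  · rw [max_eq_left h]

theorem inner_le_inner_posPart {l : EuclideanSpace ℝ (Fin n)} (hl : ∀ i, 0 ≤ l i)
    (v : EuclideanSpace ℝ (Fin n)) : ⟪l, v⟫ ≤ ⟪l, posPart v⟫ := by
  simp only [PiLp.inner_apply, RCLike.inner_apply, conj_trivial]
  exact Finset.sum_le_sum fun i _ => mul_le_mul_of_nonneg_right (le_max_left _ _) (hl i)

end PosPart

/-- Closed form of the regularized dual function: the supremum over `λ` in the nonnegative
orthant of `⟪λ, v⟫ − ‖λ‖²/(2α)` equals `(α/2)‖v₊‖²`, attained at `λ = α • v₊`, which lies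
in the nonnegative orthant. -/
theorem regularized_dual_sup (n : ℕ) (α : ℝ) (hα : 0 < α) (v : EuclideanSpace ℝ (Fin n)) :
    IsGreatest ((fun l : EuclideanSpace ℝ (Fin n) => ⟪l, v⟫ - ‖l‖ ^ 2 / (2 * α)) ''
        {l : EuclideanSpace ℝ (Fin n) | ∀ i, 0 ≤ l i})
      (α / 2 * ‖posPart v‖ ^ 2) ∧
    (∀ i, 0 ≤ (α • posPart v) i) ∧
    ⟪α • posPart v, v⟫ - ‖α • posPart v‖ ^ 2 / (2 * α) = α / 2 * ‖posPart v‖ ^ 2 := by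
  have hmem : ∀ i, 0 ≤ (α • posPart v) i := fun i =>
    mul_nonneg hα.le (posPart_apply_nonneg v i)
  have hval : ⟪α • posPart v, v⟫ - ‖α • posPart v‖ ^ 2 / (2 * α) = α / 2 * ‖posPart v‖ ^ 2 := by
    rw [real_inner_smul_left, inner_posPart_left, ← real_inner_smul_left]
    exact inner_smul_self_sub_norm_sq_div hα.ne' _
  refine ⟨⟨⟨α • posPart v, hmem, hval⟩, ?_⟩, hmem, hval⟩
  rintro _ ⟨l, hl, rfl⟩
  calc ⟪l, v⟫ - ‖l‖ ^ 2 / (2 * α)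
      ≤ ⟪l, posPart v⟫ - ‖l‖ ^ 2 / (2 * α) := by gcongr; exact inner_le_inner_posPart hl v
    _ ≤ α / 2 * ‖posPart v‖ ^ 2 := inner_sub_norm_sq_div_le hα l _
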